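/- arXiv:1406.7078 — 2 statements merged into one kernel-verified Lean document; each statement's English description precedes it below -/
import Mathlib

section
/- Let x ≥ 2, let q be an integer with 2 ≤ q ≤ x, and let B > 0 and m ≥ 1 be reals. Assume that for every a ∈ (ℤ/qℤ)^* one has π(x;q,a) ≥ m and |π(x;q,a) − π(x)/φ(q)| ≤ B. Let X be the probability distribution on the primes p ≤ x given by Pr[X = p] = 1/(φ(q)·π(x;q,p mod q)) if gcd(p,q) = 1 and Pr[X = p] = 0 if p | q. Then Δ₂²(X) ≤ (φ(q)·B²/m + ω(q))/π(x)². -/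
/-- The finite set of primes `p ≤ x`. -/
def primesUpTo (x : ℕ) : Finset ℕ := (Finset.range (x + 1)).filter Nat.Prime

/-- `π(x)`, the number of primes `≤ x`. -/
def primePi (x : ℕ) : ℕ := (primesUpTo x).card

/-- `π(x;q,a)`, the number of primes `p ≤ x` with `p ≡ a (mod q)`. -/
def primePiMod (x q a : ℕ) : ℕ :=
  ((primesUpTo x).filter (fun p => p % q = a % q)).card

/-- Canonical representatives of the invertible classes `(ℤ/qℤ)^*`. -/
def residues (q : ℕ) : Finset ℕ := (Finset.range q).filter (fun a => Nat.Coprime a q)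

/-- `φ*ₓ(q) = #{a ∈ (ℤ/qℤ)^* : π(x;q,a) ≠ 0}`. -/
def phiStar (x q : ℕ) : ℕ := ((residues q).filter (fun a => primePiMod x q a ≠ 0)).card

/-!
Split the primes `p ≤ x` according to whether `p` is coprime to `q`. A prime dividing `q` has
weight `0`, so it contributes `1/π(x)²`, and there are at most `ω(q)` of them. The primes of an
invertible class `a` all carry the weight `1/(φ(q) t)`, where `t = π(x;q,a)`, so together they
contribute `t (1/(φ(q) t) - 1/π(x))² = (t - π(x)/φ(q))² / (t π(x)²) ≤ B² / (m π(x)²)`;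
summing over the `φ(q)` classes gives the first term.
-/

open Finset

noncomputable def primeWeight (x q p : ℕ) : ℝ :=
  if p.Coprime q then 1 / ((q.totient : ℝ) * (primePiMod x q (p % q) : ℝ)) else 0

lemma card_residues (q : ℕ) : #(residues q) = q.totient := by
  simp only [residues, Nat.totient, Nat.coprime_comm]

lemma mod_mem_residues {p q : ℕ} (hq : 0 < q) (hp : p.Coprime q) : p % q ∈ residues q := by
  simpa [residues, Nat.mod_lt _ hq, ZMod.coprime_mod_iff_coprime] using hp

lemma filter_not_coprime_subset_primeFactors {q : ℕ} (hq : q ≠ 0) (x : ℕ) :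
    {p ∈ primesUpTo x | ¬ p.Coprime q} ⊆ q.primeFactors := by
  intro p hp
  simp only [primesUpTo, mem_filter] at hp
  exact Nat.mem_primeFactors.2 ⟨hp.1.2, (Nat.Prime.dvd_iff_not_coprime hp.1.2).2 hp.2, hq⟩

lemma filter_coprime_filter_mod_eq {q a : ℕ} (ha : a ∈ residues q) (x : ℕ) :
    {p ∈ {p ∈ primesUpTo x | p.Coprime q} | p % q = a} = {p ∈ primesUpTo x | p % q = a % q} := by
  simp only [residues, mem_filter, mem_range] at ha
  ext p
  simp only [mem_filter, Nat.mod_eq_of_lt ha.1]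
  refine ⟨fun h => ⟨h.1.1, h.2⟩, fun h => ⟨⟨h.1, ?_⟩, h.2⟩⟩
  rw [← ZMod.coprime_mod_iff_coprime, h.2]
  exact ha.2

lemma sum_filter_coprime_eq_sum_residues {M : Type*} [AddCommMonoid M] {q : ℕ} (hq : 0 < q)
    (x : ℕ) (f : ℕ → M) :
    ∑ p ∈ {p ∈ primesUpTo x | p.Coprime q}, f p
      = ∑ a ∈ residues q, ∑ p ∈ {p ∈ primesUpTo x | p % q = a % q}, f p := by
  rw [← sum_fiberwise_of_maps_to fun p hp => mod_mem_residues hq (mem_filter.1 hp).2]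
  exact sum_congr rfl fun a ha => by rw [filter_coprime_filter_mod_eq ha]

lemma primeWeight_of_mod_eq {x q p a : ℕ} (ha : a.Coprime q) (hpa : p % q = a % q) :
    primeWeight x q p = 1 / ((q.totient : ℝ) * (primePiMod x q a : ℝ)) := by
  have hp : p.Coprime q := by
    rwa [← ZMod.coprime_mod_iff_coprime, hpa, ZMod.coprime_mod_iff_coprime]
  simp only [primeWeight, if_pos hp, primePiMod, hpa, Nat.mod_mod]

lemma primeWeight_of_not_coprime {x q p : ℕ} (hp : ¬ p.Coprime q) : primeWeight x q p = 0 :=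
  if_neg hp

lemma mul_sq_one_div_sub_one_div_le {φ t P m B : ℝ} (hφ : 0 < φ) (hm : 0 < m) (hmt : m ≤ t)
    (hP : P ≠ 0) (h : |t - P / φ| ≤ B) :
    t * (1 / (φ * t) - 1 / P) ^ 2 ≤ B ^ 2 / (m * P ^ 2) := by
  have ht : 0 < t := hm.trans_le hmt
  have key : t * (1 / (φ * t) - 1 / P) ^ 2 = (t - P / φ) ^ 2 / (t * P ^ 2) := by
    field_simp
    ring
  rw [key, ← sq_abs]
  gcongr

lemma sum_filter_not_coprime_le {q : ℕ} (hq : q ≠ 0) (x : ℕ) (c : ℝ) :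
    ∑ p ∈ {p ∈ primesUpTo x | ¬ p.Coprime q}, (primeWeight x q p - c) ^ 2
      ≤ q.primeFactors.card * c ^ 2 := by
  calc ∑ p ∈ {p ∈ primesUpTo x | ¬ p.Coprime q}, (primeWeight x q p - c) ^ 2
      = #{p ∈ primesUpTo x | ¬ p.Coprime q} * c ^ 2 := by
        rw [sum_congr rfl fun p hp => by rw [primeWeight_of_not_coprime (mem_filter.1 hp).2],
          sum_const, nsmul_eq_mul]
        ring
    _ ≤ q.primeFactors.card * c ^ 2 := by
        gcongr
        exact filter_not_coprime_subset_primeFactors hq x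

lemma sum_filter_mod_eq_le {x q a : ℕ} {B m : ℝ} (ha : a ∈ residues q) (hm : 0 < m)
    (hlow : m ≤ primePiMod x q a)
    (hclose : |(primePiMod x q a : ℝ) - primePi x / q.totient| ≤ B) :
    ∑ p ∈ {p ∈ primesUpTo x | p % q = a % q}, (primeWeight x q p - 1 / primePi x) ^ 2
      ≤ B ^ 2 / (m * primePi x ^ 2) := by
  simp only [residues, mem_filter, mem_range] at ha
  have hφ : (0 : ℝ) < q.totient := by exact_mod_cast Nat.totient_pos.2 (by omega)
  have hP : (primePi x : ℝ) ≠ 0 := by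
    have : primePiMod x q a ≤ primePi x := card_le_card (filter_subset _ _)
    have : (0 : ℝ) < primePi x := hm.trans_le (hlow.trans (by exact_mod_cast this))
    exact this.ne'
  rw [sum_congr rfl fun p hp => by rw [primeWeight_of_mod_eq ha.2 (mem_filter.1 hp).2],
    sum_const, nsmul_eq_mul]
  exact mul_sq_one_div_sub_one_div_le hφ hm hlow hP hclose

theorem sq_imbalance_le_general (x q : ℕ) (hq : 2 ≤ q)
    (B m : ℝ) (hm : 1 ≤ m)
    (hlow : ∀ a ∈ residues q, m ≤ (primePiMod x q a : ℝ))
    (hclose : ∀ a ∈ residues q,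
      |(primePiMod x q a : ℝ) - (primePi x : ℝ) / (q.totient : ℝ)| ≤ B)
    (X : ℕ → ℝ)
    (hX : ∀ p ∈ primesUpTo x,
      X p = if Nat.Coprime p q
        then 1 / ((q.totient : ℝ) * (primePiMod x q (p % q) : ℝ)) else 0) :
    ∑ p ∈ primesUpTo x, (X p - 1 / (primePi x : ℝ)) ^ 2
      ≤ ((q.totient : ℝ) * B ^ 2 / m + (q.primeFactors.card : ℝ)) / (primePi x : ℝ) ^ 2 := by
  have hm0 : 0 < m := one_pos.trans_le hm
  have hXw : ∀ p ∈ primesUpTo x, X p = primeWeight x q p := hX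
  rw [sum_congr rfl fun p hp => by rw [hXw p hp],
    ← sum_filter_add_sum_filter_not _ (Nat.Coprime · q), add_div]
  refine add_le_add ?_ ((sum_filter_not_coprime_le (by omega) x _).trans_eq (by ring))
  calc ∑ p ∈ {p ∈ primesUpTo x | p.Coprime q}, (primeWeight x q p - 1 / primePi x) ^ 2
      = ∑ a ∈ residues q, ∑ p ∈ {p ∈ primesUpTo x | p % q = a % q},
          (primeWeight x q p - 1 / primePi x) ^ 2 :=
        sum_filter_coprime_eq_sum_residues (by omega) x _
    _ ≤ ∑ _a ∈ residues q, B ^ 2 / (m * primePi x ^ 2) :=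
        sum_le_sum fun a ha => sum_filter_mod_eq_le ha hm0 (hlow a ha) (hclose a ha)
    _ = q.totient * B ^ 2 / m / primePi x ^ 2 := by
        rw [sum_const, card_residues, nsmul_eq_mul]
        field_simp

/-- Let `x ≥ 2`, `2 ≤ q ≤ x`, `B > 0`, `m ≥ 1` real. Assume that for
every `a ∈ (ℤ/qℤ)^*` one has `π(x;q,a) ≥ m` and `|π(x;q,a) − π(x)/φ(q)| ≤ B`. Let `X` be
the distribution on primes `p ≤ x` with `Pr[X = p] = 1/(φ(q)·π(x;q,p mod q))` if
`gcd(p,q) = 1` and `Pr[X = p] = 0` if `p ∣ q`. Then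
`Δ₂²(X) ≤ (φ(q)·B²/m + ω(q))/π(x)²`. -/
theorem sq_imbalance_le (x q : ℕ) (hx : 2 ≤ x) (hq : 2 ≤ q) (hqx : q ≤ x)
    (B m : ℝ) (hB : 0 < B) (hm : 1 ≤ m)
    (hlow : ∀ a ∈ residues q, m ≤ (primePiMod x q a : ℝ))
    (hclose : ∀ a ∈ residues q,
      |(primePiMod x q a : ℝ) - (primePi x : ℝ) / (q.totient : ℝ)| ≤ B)
    (X : ℕ → ℝ)
    (hX : ∀ p ∈ primesUpTo x,
      X p = if Nat.Coprime p q
        then 1 / ((q.totient : ℝ) * (primePiMod x q (p % q) : ℝ)) else 0) :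
    ∑ p ∈ primesUpTo x, (X p - 1 / (primePi x : ℝ)) ^ 2
      ≤ ((q.totient : ℝ) * B ^ 2 / m + (q.primeFactors.card : ℝ)) / (primePi x : ℝ) ^ 2 :=
  sq_imbalance_le_general x q hq B m hm hlow hclose X hX
end

section
/- Let x ≥ 2, let q be an integer with 2 ≤ q ≤ x, assume φ*ₓ(q) > 0, and let X be the probability distribution on the primes p ≤ x given by Pr[X = p] = 1/(φ*ₓ(q)·π(x;q,p mod q)) when gcd(p,q) = 1 (and Pr[X = p] = 0 when p | q). Set S² = Σ_{a∈(ℤ/qℤ)^*, π(x;q,a)≠0} (π(x;q,a) − π(x)/φ*ₓ(q))². Then Δ₂²(X) = (1/π(x)²)·Σ_{a∈(ℤ/qℤ)^*, π(x;q,a)≠0} (1/π(x;q,a))·(π(x;q,a) − π(x)/φ*ₓ(q))² + ω(q)/π(x)², and consequently Δ₂²(X) ≤ (S² + ω(q))/π(x)². -/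
/-!
Split `Δ₂²(X)` according to whether `p` is coprime to `q`. The primes dividing `q` all lie
below `x` and carry no mass, so they contribute `ω(q)` terms equal to `1/π(x)²`. The coprime
primes in a class `a` all carry the same mass `1/(φ*ₓ(q)·π(x;q,a))`, so the class contributes
`π(x;q,a)` times one square, which rewrites as `(π(x;q,a) − π(x)/φ*ₓ(q))²/(π(x;q,a)·π(x)²)`.
The bound follows from `π(x;q,a) ≥ 1` on the classes that occur.
-/

lemma primePi_pos {x : ℕ} (hx : 2 ≤ x) : 0 < primePi x :=
  Finset.card_pos.mpr ⟨2, by simp [primesUpTo, Nat.prime_two]; omega⟩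

lemma filter_not_coprime_primesUpTo {x q : ℕ} (hq : q ≠ 0) (hqx : q ≤ x) :
    (primesUpTo x).filter (fun p => ¬ Nat.Coprime p q) = q.primeFactors := by
  ext p
  simp only [primesUpTo, Finset.mem_filter, Finset.mem_range, Nat.mem_primeFactors]
  constructor
  · rintro ⟨⟨-, hp⟩, hpq⟩
    exact ⟨hp, hp.coprime_iff_not_dvd.not_left.mp hpq, hq⟩
  · rintro ⟨hp, hpq, -⟩
    have := Nat.le_of_dvd (Nat.pos_of_ne_zero hq) hpq
    exact ⟨⟨by omega, hp⟩, fun h => hp.coprime_iff_not_dvd.mp h hpq⟩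

lemma card_filter_coprime_mod_eq_primePiMod (x : ℕ) {q a : ℕ} (ha : a ∈ residues q) :
    (((primesUpTo x).filter (fun p => Nat.Coprime p q)).filter (fun p => p % q = a)).card
      = primePiMod x q a := by
  simp only [residues, Finset.mem_filter, Finset.mem_range] at ha
  rw [primePiMod, Finset.filter_filter, Nat.mod_eq_of_lt ha.1]
  congr 1
  refine Finset.filter_congr fun p _ => and_iff_right_of_imp fun hpa => ?_
  rw [← ZMod.coprime_mod_iff_coprime, hpa]
  exact ha.2

lemma sum_filter_coprime_primesUpTo {M : Type*} [AddCommMonoid M] (x : ℕ) {q : ℕ} (hq : q ≠ 0)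
    (f : ℕ → M) :
    ∑ p ∈ (primesUpTo x).filter (fun p => Nat.Coprime p q), f (p % q)
      = ∑ a ∈ (residues q).filter (fun a => primePiMod x q a ≠ 0), primePiMod x q a • f a := by
  rw [Finset.sum_filter_of_ne fun a _ h => left_ne_zero_of_smul h,
    ← Finset.sum_fiberwise_of_maps_to (g := (· % q)) (t := residues q)]
  · refine Finset.sum_congr rfl fun a ha => ?_
    rw [Finset.sum_congr rfl fun p hp => congrArg f (Finset.mem_filter.mp hp).2,
      Finset.sum_const, card_filter_coprime_mod_eq_primePiMod x ha]
  · intro p hp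
    simp only [residues, Finset.mem_filter, Finset.mem_range]
    exact ⟨Nat.mod_lt _ (Nat.pos_of_ne_zero hq),
      (ZMod.coprime_mod_iff_coprime p q).mpr (Finset.mem_filter.mp hp).2⟩

lemma mul_sq_one_div_sub_one_div {n c π : ℝ} (hn : n ≠ 0) (hπ : π ≠ 0) :
    n * (1 / (c * n) - 1 / π) ^ 2 = 1 / π ^ 2 * (1 / n * (n - π / c) ^ 2) := by
  field_simp
  ring

theorem sq_imbalance_eq_and_le_phiStar_general (x q : ℕ) (hq : 2 ≤ q) (hqx : q ≤ x)
    (X : ℕ → ℝ)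
    (hX : ∀ p ∈ primesUpTo x,
      X p = if Nat.Coprime p q
        then 1 / ((phiStar x q : ℝ) * (primePiMod x q (p % q) : ℝ)) else 0) :
    (∑ p ∈ primesUpTo x, (X p - 1 / (primePi x : ℝ)) ^ 2
      = (1 / (primePi x : ℝ) ^ 2) *
          ∑ a ∈ (residues q).filter (fun a => primePiMod x q a ≠ 0),
            (1 / (primePiMod x q a : ℝ)) *
              ((primePiMod x q a : ℝ) - (primePi x : ℝ) / (phiStar x q : ℝ)) ^ 2
        + (q.primeFactors.card : ℝ) / (primePi x : ℝ) ^ 2) ∧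
    ∑ p ∈ primesUpTo x, (X p - 1 / (primePi x : ℝ)) ^ 2
      ≤ ((∑ a ∈ (residues q).filter (fun a => primePiMod x q a ≠ 0),
            ((primePiMod x q a : ℝ) - (primePi x : ℝ) / (phiStar x q : ℝ)) ^ 2)
          + (q.primeFactors.card : ℝ)) / (primePi x : ℝ) ^ 2 := by
  have hπ : (primePi x : ℝ) ≠ 0 := by exact_mod_cast (primePi_pos (by omega)).ne'
  have hcoprime :
      ∑ p ∈ (primesUpTo x).filter (Nat.Coprime · q), (X p - 1 / (primePi x : ℝ)) ^ 2
      = 1 / (primePi x : ℝ) ^ 2 * ∑ a ∈ (residues q).filter (fun a => primePiMod x q a ≠ 0),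
          1 / (primePiMod x q a : ℝ) *
            ((primePiMod x q a : ℝ) - (primePi x : ℝ) / (phiStar x q : ℝ)) ^ 2 := by
    rw [Finset.sum_congr rfl fun p hp => by
        rw [hX p (Finset.mem_filter.mp hp).1, if_pos (Finset.mem_filter.mp hp).2],
      sum_filter_coprime_primesUpTo x (by omega)
        (fun a => (1 / ((phiStar x q : ℝ) * primePiMod x q a) - 1 / primePi x) ^ 2),
      Finset.mul_sum]
    refine Finset.sum_congr rfl fun a ha => ?_
    rw [nsmul_eq_mul, mul_sq_one_div_sub_one_div _ hπ]
    exact Nat.cast_ne_zero.mpr (Finset.mem_filter.mp ha).2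
  have hdvd :
      ∑ p ∈ (primesUpTo x).filter (¬ Nat.Coprime · q), (X p - 1 / (primePi x : ℝ)) ^ 2
      = q.primeFactors.card / (primePi x : ℝ) ^ 2 := by
    rw [Finset.sum_congr rfl fun p hp => by
        rw [hX p (Finset.mem_filter.mp hp).1, if_neg (Finset.mem_filter.mp hp).2, zero_sub,
          neg_sq, div_pow, one_pow],
      Finset.sum_const, nsmul_eq_mul, mul_one_div, filter_not_coprime_primesUpTo (by omega) hqx]
  have heq := (Finset.sum_filter_add_sum_filter_not _ (Nat.Coprime · q) _).symm.trans
    (congrArg₂ (· + ·) hcoprime hdvd)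
  refine ⟨heq, heq ▸ ?_⟩
  rw [add_div, one_div_mul_eq_div]
  gcongr with a ha
  rw [one_div_mul_eq_div]
  exact div_le_self (sq_nonneg _)
    (by exact_mod_cast Nat.one_le_iff_ne_zero.mpr (Finset.mem_filter.mp ha).2)

/-- Let `x ≥ 2`, `2 ≤ q ≤ x`, `φ*ₓ(q) > 0`, and let `X` be the
distribution on primes `p ≤ x` with `Pr[X = p] = 1/(φ*ₓ(q)·π(x;q,p mod q))` when
`gcd(p,q) = 1` and `Pr[X = p] = 0` when `p ∣ q`. With
`S² = ∑_{a∈(ℤ/qℤ)^*, π(x;q,a)≠0} (π(x;q,a) − π(x)/φ*ₓ(q))²`, one has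
`Δ₂²(X) = (1/π(x)²)·∑_{a∈(ℤ/qℤ)^*, π(x;q,a)≠0} (1/π(x;q,a))·(π(x;q,a) − π(x)/φ*ₓ(q))²
  + ω(q)/π(x)²` and consequently `Δ₂²(X) ≤ (S² + ω(q))/π(x)²`. -/
theorem sq_imbalance_eq_and_le_phiStar (x q : ℕ) (hx : 2 ≤ x) (hq : 2 ≤ q) (hqx : q ≤ x)
    (hφ : 0 < phiStar x q)
    (X : ℕ → ℝ)
    (hX : ∀ p ∈ primesUpTo x,
      X p = if Nat.Coprime p q
        then 1 / ((phiStar x q : ℝ) * (primePiMod x q (p % q) : ℝ)) else 0) :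
    (∑ p ∈ primesUpTo x, (X p - 1 / (primePi x : ℝ)) ^ 2
      = (1 / (primePi x : ℝ) ^ 2) *
          ∑ a ∈ (residues q).filter (fun a => primePiMod x q a ≠ 0),
            (1 / (primePiMod x q a : ℝ)) *
              ((primePiMod x q a : ℝ) - (primePi x : ℝ) / (phiStar x q : ℝ)) ^ 2
        + (q.primeFactors.card : ℝ) / (primePi x : ℝ) ^ 2) ∧
    ∑ p ∈ primesUpTo x, (X p - 1 / (primePi x : ℝ)) ^ 2
      ≤ ((∑ a ∈ (residues q).filter (fun a => primePiMod x q a ≠ 0),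
            ((primePiMod x q a : ℝ) - (primePi x : ℝ) / (phiStar x q : ℝ)) ^ 2)
          + (q.primeFactors.card : ℝ)) / (primePi x : ℝ) ^ 2 :=
  sq_imbalance_eq_and_le_phiStar_general x q hq hqx X hX
end
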